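/- arXiv:2005.12817 — 2 statements merged into one kernel-verified Lean document; each statement's English description precedes it below -/
import Mathlib

section
/- Let G be a stable weighted multigraph of genus g and let d be a multidegree of total degree g − 1 on G. Then d is stable if and only if there exists a totally cyclic orientation O of G with d = d_O. -/
open Finset

/-- A multigraph on vertex type `V` with edge type `E`: each edge `e` joins the
(possibly equal) vertices `fst e` and `snd e` (loops and multiple edges allowed). -/
structure Multigraph (V E : Type) where
  fst : E → V
  snd : E → V

/-- An orientation of a multigraph: each edge gets a tail and a head, which are its
two endpoints (in one of the two possible orders). -/
structure GraphOrientation {V E : Type} (G : Multigraph V E) where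
  tail : E → V
  head : E → V
  compat : ∀ e, (tail e = G.fst e ∧ head e = G.snd e) ∨ (tail e = G.snd e ∧ head e = G.fst e)

variable {V E : Type} [Fintype V] [Fintype E] [DecidableEq V] [DecidableEq E]

namespace Multigraph

/-- `E(S)`: the set of edges with both endpoints in `S`. -/
def edgesIn (G : Multigraph V E) (S : Finset V) : Finset E :=
  univ.filter fun e => G.fst e ∈ S ∧ G.snd e ∈ S

/-- Membership in the cut of `S`: exactly one endpoint of `e` lies in `S`. -/
def InCut (G : Multigraph V E) (S : Finset V) (e : E) : Prop :=
  (G.fst e ∈ S ∧ G.snd e ∉ S) ∨ (G.fst e ∉ S ∧ G.snd e ∈ S)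

instance (G : Multigraph V E) (S : Finset V) : DecidablePred (G.InCut S) := fun e =>
  decidable_of_iff ((G.fst e ∈ S ∧ G.snd e ∉ S) ∨ (G.fst e ∉ S ∧ G.snd e ∈ S)) Iff.rfl

/-- `ε(S)`: the number of edges with exactly one endpoint in `S`. -/
def cutCard (G : Multigraph V E) (S : Finset V) : ℕ :=
  (univ.filter fun e => G.InCut S e).card

/-- The genus `g(S) = |E(S)| - |S| + 1 + Σ_{v ∈ S} g_v` of a subset of vertices,
for the vertex weight function `w`. -/
def genusOf (G : Multigraph V E) (w : V → ℕ) (S : Finset V) : ℤ :=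
  ((G.edgesIn S).card : ℤ) - S.card + 1 + ∑ v ∈ S, (w v : ℤ)

/-- The genus of the weighted multigraph. -/
def genus (G : Multigraph V E) (w : V → ℕ) : ℤ := G.genusOf w univ

/-- The valence of a vertex: the number of edge-ends at it (a loop counts twice). -/
def valence (G : Multigraph V E) (v : V) : ℕ :=
  (univ.filter fun e => G.fst e = v).card + (univ.filter fun e => G.snd e = v).card

/-- Adjacency via some edge. -/
def Adj (G : Multigraph V E) (a b : V) : Prop :=
  ∃ e, (G.fst e = a ∧ G.snd e = b) ∨ (G.fst e = b ∧ G.snd e = a)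

/-- The multigraph is connected: nonempty, and any two vertices are joined by a path. -/
def Connected (G : Multigraph V E) : Prop :=
  Nonempty V ∧ ∀ a b : V, Relation.ReflTransGen G.Adj a b

/-- Adjacency inside the induced subgraph on `S` (via an edge of `E(S)`). -/
def AdjOn (G : Multigraph V E) (S : Finset V) (a b : V) : Prop :=
  ∃ e, ((G.fst e = a ∧ G.snd e = b) ∨ (G.fst e = b ∧ G.snd e = a)) ∧
    G.fst e ∈ S ∧ G.snd e ∈ S

/-- The induced subgraph on `S` is connected. -/
def ConnectedOn (G : Multigraph V E) (S : Finset V) : Prop :=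
  ∀ a ∈ S, ∀ b ∈ S, Relation.ReflTransGen (G.AdjOn S) a b

/-- The weighted multigraph is stable: connected, of genus at least 2, and every
vertex of weight 0 has valence at least 3. -/
def IsStable (G : Multigraph V E) (w : V → ℕ) : Prop :=
  G.Connected ∧ 2 ≤ G.genus w ∧ ∀ v, w v = 0 → 3 ≤ G.valence v

/-- A multidegree `d : V → ℤ` of total degree `δ = ∑ v, d v` is semistable if for every
nonempty `S ⊆ V`:
`(2g-2)(g(S)-1) + (δ-g+1)(2g(S)-2+ε(S)) ≤ (2g-2) Σ_{v ∈ S} d v`. -/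
def Semistable (G : Multigraph V E) (w : V → ℕ) (d : V → ℤ) : Prop :=
  ∀ S : Finset V, S.Nonempty →
    (2 * G.genus w - 2) * (G.genusOf w S - 1) +
      ((∑ v, d v) - G.genus w + 1) * (2 * G.genusOf w S - 2 + (G.cutCard S : ℤ)) ≤
    (2 * G.genus w - 2) * ∑ v ∈ S, d v

/-- A multidegree is stable if it is semistable and the semistability inequality is
strict for every nonempty proper subset of vertices. -/
def StableDeg (G : Multigraph V E) (w : V → ℕ) (d : V → ℤ) : Prop :=
  G.Semistable w d ∧ ∀ S : Finset V, S.Nonempty → S ≠ univ →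
    (2 * G.genus w - 2) * (G.genusOf w S - 1) +
      ((∑ v, d v) - G.genus w + 1) * (2 * G.genusOf w S - 2 + (G.cutCard S : ℤ)) <
    (2 * G.genus w - 2) * ∑ v ∈ S, d v

/-- A multidegree is effective if it is nonnegative at every vertex. -/
def Effective (d : V → ℤ) : Prop := ∀ v, 0 ≤ d v

end Multigraph

namespace GraphOrientation

variable {G : Multigraph V E}

/-- The indegree of a vertex: the number of edges with head `v`. -/
def indeg (O : GraphOrientation G) (v : V) : ℕ :=
  (univ.filter fun e => O.head e = v).card

/-- The multidegree `d_O` associated to an orientation: `d_O(v) = g_v - 1 + indeg_O(v)`. -/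
def multidegree (O : GraphOrientation G) (w : V → ℕ) : V → ℤ :=
  fun v => (w v : ℤ) - 1 + (O.indeg v : ℤ)

/-- The edge `e₀` lies on a directed cycle of `O`: there are `k ≥ 1` distinct vertices
`vs` and distinct edges `es`, with `es i` directed from `vs i` to `vs (i+1)`,
one of the edges being `e₀`. -/
def EdgeInCycle (O : GraphOrientation G) (e₀ : E) : Prop :=
  ∃ (k : ℕ) (vs : Fin (k + 1) → V) (es : Fin (k + 1) → E),
    Function.Injective vs ∧ Function.Injective es ∧ (∃ i, es i = e₀) ∧
    ∀ i, O.tail (es i) = vs i ∧ O.head (es i) = vs (i + 1)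

/-- The orientation contains a directed cycle. -/
def HasDirectedCycle (O : GraphOrientation G) : Prop :=
  ∃ (k : ℕ) (vs : Fin (k + 1) → V) (es : Fin (k + 1) → E),
    Function.Injective vs ∧ Function.Injective es ∧
    ∀ i, O.tail (es i) = vs i ∧ O.head (es i) = vs (i + 1)

/-- The orientation is acyclic: it contains no directed cycle. -/
def Acyclic (O : GraphOrientation G) : Prop := ¬ O.HasDirectedCycle

/-- The orientation is totally cyclic: every edge lies on a directed cycle. -/
def TotallyCyclic (O : GraphOrientation G) : Prop := ∀ e, O.EdgeInCycle e

/-- The cut of `S` is directed towards `S`: every edge of the cut has its head in `S`. -/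
def CutTowards (O : GraphOrientation G) (S : Finset V) : Prop :=
  ∀ e, G.InCut S e → O.head e ∈ S

/-- The cut of `S` is directed away from `S`: every edge of the cut has its tail in `S`. -/
def CutAway (O : GraphOrientation G) (S : Finset V) : Prop :=
  ∀ e, G.InCut S e → O.tail e ∈ S

end GraphOrientation

/-!
With total degree `g - 1` the second term of the (semi)stability inequality vanishes, and writing
`d = w - 1 + n` the conditions read `|E(S)| ≤ ∑_{v ∈ S} n v` for nonempty `S`, strictly for proper
ones. For every orientation `∑_{v ∈ S} indeg v = |E(S)| + #(edges entering S)`, so for `n = indeg`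
strictness says that every proper cut is entered by some edge, which for a connected graph is
equivalent to total cyclicity. Conversely, an orientation with indegrees `n` exists by Hall's
theorem, every edge choosing one of the `n v` slots offered by an endpoint `v`.
-/

theorem Relation.ReflTransGen.exists_rel_of_not {α : Type*} {r : α → α → Prop} {P : α → Prop}
    {a b : α} (h : Relation.ReflTransGen r a b) (ha : P a) (hb : ¬ P b) :
    ∃ x y, r x y ∧ P x ∧ ¬ P y := by
  induction h with
  | refl => exact absurd ha hb
  | @tail c _ _ _ _ => by_cases P c <;> grind

section
variable {V E : Type}

theorem Multigraph.Connected.exists_inCut [Fintype V] {G : Multigraph V E} (hG : G.Connected)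
    {S : Finset V} (hne : S.Nonempty) (hS : S ≠ univ) : ∃ e, G.InCut S e := by
  obtain ⟨a, ha⟩ := hne
  obtain ⟨b, hb⟩ := not_forall.1 (mt eq_univ_iff_forall.2 hS)
  obtain ⟨x, y, ⟨e, he⟩, hx, hy⟩ := (hG.2 a b).exists_rel_of_not (P := (· ∈ S)) ha hb
  refine ⟨e, ?_⟩
  unfold Multigraph.InCut
  grind

namespace GraphOrientation

variable {G : Multigraph V E} (O : GraphOrientation G)

def Arc (x y : V) : Prop := ∃ e, O.tail e = x ∧ O.head e = y

def enteringEdges [Fintype E] [DecidableEq V] (S : Finset V) : Finset E :=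
  univ.filter fun e => G.InCut S e ∧ O.head e ∈ S

theorem inCut_iff (S : Finset V) (e : E) :
    G.InCut S e ↔ (O.tail e ∈ S ∧ O.head e ∉ S) ∨ (O.tail e ∉ S ∧ O.head e ∈ S) := by
  unfold Multigraph.InCut
  rcases O.compat e with ⟨h₁, h₂⟩ | ⟨h₁, h₂⟩ <;> rw [h₁, h₂]; tauto

theorem mem_edgesIn_iff [Fintype E] [DecidableEq V] (S : Finset V) (e : E) :
    e ∈ G.edgesIn S ↔ O.tail e ∈ S ∧ O.head e ∈ S := by
  simp only [Multigraph.edgesIn, mem_filter, mem_univ, true_and]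
  rcases O.compat e with ⟨h₁, h₂⟩ | ⟨h₁, h₂⟩ <;> rw [h₁, h₂]; tauto

theorem sum_indeg [Fintype E] [DecidableEq V] (S : Finset V) :
    ∑ v ∈ S, O.indeg v = #(G.edgesIn S) + #(O.enteringEdges S) := by
  classical
  have hfib : ∑ v ∈ S, O.indeg v = #(univ.filter fun e => O.head e ∈ S) := by
    rw [card_eq_sum_card_fiberwise (s := univ.filter fun e => O.head e ∈ S) (t := S)
      fun e he => (mem_filter.1 he).2]
    refine sum_congr rfl fun v hv => congrArg card ?_
    ext e
    simp only [mem_filter, mem_univ, true_and]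
    exact ⟨fun h => ⟨h ▸ hv, h⟩, And.right⟩
  rw [hfib, ← card_union_of_disjoint]
  · congr 1
    ext e
    simp only [enteringEdges, mem_union, mem_filter, mem_univ, true_and, mem_edgesIn_iff O,
      inCut_iff O]
    tauto
  · rw [disjoint_left]
    intro e h₁ h₂
    simp only [enteringEdges, mem_filter, mem_univ, true_and, mem_edgesIn_iff O,
      inCut_iff O] at h₁ h₂
    tauto

theorem sum_multidegree [Fintype E] [DecidableEq V] (w : V → ℕ) (S : Finset V) :
    ∑ v ∈ S, O.multidegree w v = G.genusOf w S - 1 + #(O.enteringEdges S) := by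
  have := O.sum_indeg S
  simp only [multidegree, sum_add_distrib, sum_sub_distrib, Multigraph.genusOf]
  push_cast [← Nat.cast_sum, this]
  simp only [Nat.cast_sum, sum_const, Int.nsmul_eq_mul, mul_one]
  ring


theorem exists_nodup_path {a b : V} (h : Relation.ReflTransGen O.Arc a b) :
    ∃ l : List E, a :: l.map O.head = l.map O.tail ++ [b] ∧ (a :: l.map O.head).Nodup := by
  classical
  induction h using Relation.ReflTransGen.head_induction_on with
  | refl => exact ⟨[], rfl, List.nodup_singleton b⟩
  | head hac _ ih =>
    obtain ⟨e, rfl, rfl⟩ := hac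
    obtain ⟨l, hl, hnd⟩ := ih
    by_cases ha : O.tail e ∈ O.head e :: l.map O.head
    · -- cut the path at the first return to `O.tail e`
      set j := (O.head e :: l.map O.head).idxOf (O.tail e)
      have hj : j < l.length + 1 := by simpa using List.idxOf_lt_length_of_mem ha
      have hdrop : O.tail e :: (l.drop j).map O.head = (O.head e :: l.map O.head).drop j := by
        rw [List.drop_eq_getElem_cons (l := O.head e :: l.map O.head) (by simpa using hj),
          List.getElem_idxOf, List.drop_succ_cons, List.map_drop]
      refine ⟨l.drop j, ?_, hdrop ▸ hnd.sublist (List.drop_sublist j _)⟩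
      rw [hdrop, hl, List.drop_append_of_le_length (by simp; omega), List.map_drop]
    · exact ⟨e :: l, by simp [hl], List.nodup_cons.2 ⟨ha, hnd⟩⟩

theorem edgeInCycle_of_rotate {e₀ : E} (c : List E) (he : e₀ ∈ c) (hnd : (c.map O.head).Nodup)
    (hrot : c.map O.head = (c.map O.tail).rotate 1) : O.EdgeInCycle e₀ := by
  obtain ⟨k, hk⟩ : ∃ k, c.length = k + 1 :=
    Nat.exists_eq_succ_of_ne_zero (List.length_pos_of_mem he).ne'
  let es : Fin (k + 1) → E := fun i => c.get (i.cast hk.symm)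
  have htail : Function.Injective fun i => O.tail (es i) := by
    intro i j hij
    have hinj := List.nodup_iff_injective_get.1 (List.nodup_rotate.1 (hrot ▸ hnd))
    have := @hinj ⟨i, by simp; omega⟩ ⟨j, by simp; omega⟩ (by simpa [es] using hij)
    simpa [Fin.ext_iff] using this
  have hstep : ∀ i, O.head (es i) = O.tail (es (i + 1)) := by
    intro i
    have hi : i.val < (c.map O.head).length := by simp; omega
    have := List.getElem_of_eq hrot hi
    rw [List.getElem_rotate] at this
    simp only [List.getElem_map, List.length_map, hk] at this
    simp only [es, List.get_eq_getElem, Fin.val_cast, Fin.val_add, Fin.val_one', Nat.add_mod_mod]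
    exact this
  obtain ⟨i, hi, rfl⟩ := List.getElem_of_mem he
  exact ⟨k, fun i => O.tail (es i), es, htail, htail.of_comp, ⟨⟨i, hk ▸ hi⟩, rfl⟩,
    fun i => ⟨rfl, hstep i⟩⟩

open Fin.NatCast in
theorem edgeInCycle_iff_reflTransGen (e₀ : E) :
    O.EdgeInCycle e₀ ↔ Relation.ReflTransGen O.Arc (O.head e₀) (O.tail e₀) := by
  constructor
  · rintro ⟨k, vs, es, -, -, ⟨i, rfl⟩, hstep⟩
    have hwalk : ∀ m : ℕ,
        Relation.ReflTransGen O.Arc (vs (i + 1)) (vs (i + 1 + (m : Fin (k + 1)))) := by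
      intro m
      induction m with
      | zero => simpa using Relation.ReflTransGen.refl
      | succ m ih =>
        refine ih.tail ⟨es (i + 1 + (m : Fin (k + 1))), (hstep _).1, ?_⟩
        rw [(hstep _).2, Nat.cast_succ, add_assoc]
    rw [(hstep i).1, (hstep i).2]
    simpa only [Fin.cast_val_eq_self, add_sub_cancel] using hwalk (i - (i + 1)).val
  · intro h
    obtain ⟨l, hl, hnd⟩ := O.exists_nodup_path h
    refine O.edgeInCycle_of_rotate (e₀ :: l) List.mem_cons_self hnd ?_
    simpa using hl

theorem totallyCyclic_iff_forall_enteringEdges_nonempty [Fintype V] [Fintype E] [DecidableEq V]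
    (hG : G.Connected) :
    O.TotallyCyclic ↔ ∀ S : Finset V, S.Nonempty → S ≠ univ → (O.enteringEdges S).Nonempty := by
  simp only [TotallyCyclic, edgeInCycle_iff_reflTransGen, enteringEdges, filter_nonempty_iff,
    mem_univ, true_and]
  constructor
  · intro htc S hne hS
    obtain ⟨e, he⟩ := hG.exists_inCut hne hS
    rcases (O.inCut_iff S e).1 he with ⟨ht, hh⟩ | ⟨-, hh⟩
    · -- the cycle through the edge leaving `S` has to come back into `S`
      obtain ⟨x, y, ⟨f, rfl, rfl⟩, hx, hy⟩ :=
        (htc e).exists_rel_of_not (P := (· ∉ S)) hh (not_not.2 ht)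
      exact ⟨f, (O.inCut_iff S f).2 (Or.inr ⟨hx, not_not.1 hy⟩), not_not.1 hy⟩
    · exact ⟨e, he, hh⟩
  · intro h e₀
    by_contra hunreach
    classical
    let R : Finset V := univ.filter fun v => ¬ Relation.ReflTransGen O.Arc (O.head e₀) v
    have hR : R ≠ univ := fun hR =>
      (mem_filter.1 (hR ▸ mem_univ (O.head e₀) : O.head e₀ ∈ R)).2 .refl
    obtain ⟨f, hf, hfR⟩ := h R ⟨O.tail e₀, by simpa [R] using hunreach⟩ hR
    rcases (O.inCut_iff R f).1 hf with ⟨-, hh⟩ | ⟨ht, -⟩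
    · exact hh hfR
    · simp only [R, mem_filter, mem_univ, true_and, not_not] at ht hfR
      exact hfR (ht.tail ⟨f, rfl, rfl⟩)

end GraphOrientation

def GraphOrientation.ofHead [DecidableEq V] (G : Multigraph V E) (h : E → V)
    (hh : ∀ e, h e = G.fst e ∨ h e = G.snd e) : GraphOrientation G where
  tail e := if h e = G.fst e then G.snd e else G.fst e
  head := h
  compat e := by
    by_cases h₁ : h e = G.fst e
    · simp [h₁]
    · simpa [h₁] using hh e

theorem Multigraph.exists_orientation_indeg_eq [Fintype V] [Fintype E] [DecidableEq V]
    (G : Multigraph V E) (n : V → ℕ) (htot : ∑ v, n v = Fintype.card E)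
    (hS : ∀ S : Finset V, S.Nonempty → #(G.edgesIn S) ≤ ∑ v ∈ S, n v) :
    ∃ O : GraphOrientation G, ∀ v, O.indeg v = n v := by
  classical
  let slots (e : E) : Finset (Σ v, Fin (n v)) := univ.filter fun s => s.1 = G.fst e ∨ s.1 = G.snd e
  have hall : ∀ A : Finset E, #A ≤ #(A.biUnion slots) := by
    intro A
    rcases A.eq_empty_or_nonempty with rfl | hA
    · simp
    set S := A.image G.fst ∪ A.image G.snd
    have hslots : A.biUnion slots = S.sigma fun _ => univ := by
      ext ⟨v, i⟩
      simp only [slots, S, mem_biUnion, mem_filter, mem_univ, true_and, mem_sigma, mem_union,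
        mem_image, and_true]
      grind
    calc #A ≤ #(G.edgesIn S) := card_le_card fun e he => by
            simp only [Multigraph.edgesIn, mem_union, mem_image, mem_filter, mem_univ, true_and, S]
            grind
      _ ≤ ∑ v ∈ S, n v := hS S ((hA.image _).mono subset_union_left)
      _ = #(A.biUnion slots) := by simp [hslots, card_sigma]
  obtain ⟨f, hf, hfe⟩ := (all_card_le_biUnion_card_iff_exists_injective slots).1 hall
  let O := GraphOrientation.ofHead G (fun e => (f e).1) fun e => by simpa [slots] using hfe e
  have hle : ∀ v, O.indeg v ≤ n v := fun v => by
    calc O.indeg v ≤ #(univ.filter fun s : Σ v, Fin (n v) => s.1 = v) :=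
          card_le_card_of_injOn f (fun e he => by simpa [O, GraphOrientation.ofHead] using he)
            hf.injOn
      _ = #(({v} : Finset V).sigma fun _ => univ) := by congr 1; ext ⟨u, i⟩; simp
      _ = n v := by simp [card_sigma]
  have hsum : ∑ v, O.indeg v = ∑ v, n v := by
    rw [htot]
    exact (card_eq_sum_card_fiberwise (f := O.head) (s := univ) (t := univ) (by simp)).symm
  exact ⟨O, fun v => (sum_eq_sum_iff_of_le fun v _ => hle v).1 hsum v (mem_univ v)⟩

end

section
variable {V E : Type} [Fintype V] [Fintype E] [DecidableEq V]

namespace Multigraph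

theorem stableDeg_iff_of_sum_eq {G : Multigraph V E} {w : V → ℕ} {d : V → ℤ}
    (hg : 2 ≤ G.genus w) (hd : ∑ v, d v = G.genus w - 1) :
    G.StableDeg w d ↔ (∀ S : Finset V, S.Nonempty → G.genusOf w S - 1 ≤ ∑ v ∈ S, d v) ∧
      ∀ S : Finset V, S.Nonempty → S ≠ univ → G.genusOf w S - 1 < ∑ v ∈ S, d v := by
  have hpos : 0 < 2 * G.genus w - 2 := by omega
  have hzero : G.genus w - 1 - G.genus w + 1 = 0 := by ring
  simp only [StableDeg, Semistable, hd, hzero, zero_mul, add_zero, mul_le_mul_iff_right₀ hpos,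
    mul_lt_mul_iff_right₀ hpos]

theorem edgesIn_univ (G : Multigraph V E) : G.edgesIn univ = univ := by
  ext e
  simp [edgesIn]

theorem exists_orientation_multidegree_eq {G : Multigraph V E} {w : V → ℕ} {d : V → ℤ}
    (hd : ∑ v, d v = G.genus w - 1)
    (hle : ∀ S : Finset V, S.Nonempty → G.genusOf w S - 1 ≤ ∑ v ∈ S, d v) :
    ∃ O : GraphOrientation G, d = O.multidegree w := by
  set n : V → ℕ := fun v => (d v - w v + 1).toNat
  have hn : ∀ v, (n v : ℤ) = d v - w v + 1 := fun v => Int.toNat_of_nonneg <| by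
    have := hle {v} (singleton_nonempty v)
    simp only [genusOf, card_singleton, sum_singleton] at this
    omega
  have hsum : ∀ S : Finset V,
      ∑ v ∈ S, (n v : ℤ) = ∑ v ∈ S, d v - (G.genusOf w S - 1) + #(G.edgesIn S) := fun S => by
    simp only [hn, sum_add_distrib, sum_sub_distrib, genusOf, sum_const, Int.nsmul_eq_mul,
      mul_one]
    ring
  have htot : ∑ v, n v = Fintype.card E := by
    have := hsum univ
    rw [hd, ← genus, edgesIn_univ, card_univ] at this
    zify
    linarith
  obtain ⟨O, hO⟩ := G.exists_orientation_indeg_eq n htot fun S hS => by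
    have := hsum S
    have := hle S hS
    zify
    linarith
  refine ⟨O, funext fun v => ?_⟩
  simp only [GraphOrientation.multidegree, hO, hn]
  ring

end Multigraph
end

open Multigraph GraphOrientation in
/-- A multidegree of total degree `g - 1` on a stable weighted multigraph
is stable iff `d = d_O` for some totally cyclic orientation `O`. -/
theorem stable_degree_g_sub_one_iff_totally_cyclic
    (G : Multigraph V E) (w : V → ℕ) (hG : G.IsStable w) (d : V → ℤ)
    (hd : ∑ v, d v = G.genus w - 1) :
    G.StableDeg w d ↔
      ∃ O : GraphOrientation G, O.TotallyCyclic ∧ d = O.multidegree w := by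
  obtain ⟨hconn, hg, -⟩ := hG
  rw [stableDeg_iff_of_sum_eq hg hd]
  constructor
  · rintro ⟨hle, hlt⟩
    obtain ⟨O, rfl⟩ := exists_orientation_multidegree_eq hd hle
    refine ⟨O, (O.totallyCyclic_iff_forall_enteringEdges_nonempty hconn).2 fun S hne hS => ?_, rfl⟩
    have := hlt S hne hS
    rw [O.sum_multidegree] at this
    exact card_pos.1 (by omega)
  · rintro ⟨O, hO, rfl⟩
    refine ⟨fun S _ => by rw [O.sum_multidegree]; omega, fun S hne hS => ?_⟩
    have := card_pos.2 ((O.totallyCyclic_iff_forall_enteringEdges_nonempty hconn).1 hO S hne hS)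
    rw [O.sum_multidegree]
    omega
end

section
/- Let G be a stable weighted multigraph of genus g and let d be a multidegree of total degree g on G. Then d is semistable if and only if there exist a vertex v ∈ V and an orientation O of G such that d = d_O + v and there is no nonempty proper subset S ⊊ V with v ∈ S whose cut is directed towards S. -/
open Finset

variable {V E : Type} [Fintype V] [Fintype E] [DecidableEq V] [DecidableEq E]

section AuxProof

variable (G : Multigraph V E) (w : V → ℕ)

private lemma sum_fiber_card (f : E → V) (S : Finset V) :
    ∑ u ∈ S, ((univ : Finset E).filter fun e => f e = u).card
      = ((univ : Finset E).filter fun e => f e ∈ S).card := by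
  simp only [Finset.card_filter]
  rw [Finset.sum_comm]
  exact Finset.sum_congr rfl fun e _ => Finset.sum_ite_eq S (f e) fun _ => 1

private lemma sum_valence_eq (S : Finset V) :
    ∑ v ∈ S, G.valence v = 2 * (G.edgesIn S).card + G.cutCard S := by
  simp only [Multigraph.valence]
  rw [Finset.sum_add_distrib, sum_fiber_card G.fst S, sum_fiber_card G.snd S]
  simp only [Multigraph.edgesIn, Multigraph.cutCard, Finset.card_filter]
  rw [Finset.mul_sum, ← Finset.sum_add_distrib, ← Finset.sum_add_distrib]
  refine Finset.sum_congr rfl fun e _ => ?_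
  by_cases hf : G.fst e ∈ S <;> by_cases hs : G.snd e ∈ S <;>
    simp [Multigraph.InCut, hf, hs]

private lemma genus_term (S : Finset V) :
    2 * G.genusOf w S - 2 + (G.cutCard S : ℤ)
      = ∑ v ∈ S, (2 * (w v : ℤ) - 2 + (G.valence v : ℤ)) := by
  have h : (∑ v ∈ S, (G.valence v : ℤ))
      = 2 * ((G.edgesIn S).card : ℤ) + (G.cutCard S : ℤ) := by
    exact_mod_cast congrArg (Nat.cast : ℕ → ℤ) (sum_valence_eq G S)
  have h2 : ∑ v ∈ S, (2 * (w v : ℤ) - 2 + (G.valence v : ℤ))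
      = (∑ v ∈ S, 2 * (w v : ℤ)) - 2 * S.card + ∑ v ∈ S, (G.valence v : ℤ) := by
    rw [Finset.sum_add_distrib, Finset.sum_sub_distrib]
    simp [Finset.sum_const, mul_comm]
  rw [h2, h, ← Finset.mul_sum]
  unfold Multigraph.genusOf
  ring

private lemma term_ge_one (hG : G.IsStable w) (v : V) :
    1 ≤ 2 * (w v : ℤ) - 2 + (G.valence v : ℤ) := by
  obtain ⟨⟨hne, hconn⟩, hg2, hval3⟩ := hG
  rcases Nat.lt_or_ge (w v) 2 with hw | hw
  · have h01 : w v = 0 ∨ w v = 1 := by omega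
    rcases h01 with h0 | h1
    · have h3 : (3 : ℤ) ≤ (G.valence v : ℤ) := by exact_mod_cast hval3 v h0
      rw [h0]; push_cast; linarith
    · -- need valence ≥ 1
      have hval : 1 ≤ G.valence v := by
        by_contra hv
        have hv0 : G.valence v = 0 := by omega
        have hA : ((univ : Finset E).filter fun e => G.fst e = v) = ∅ := by
          have : ((univ : Finset E).filter fun e => G.fst e = v).card = 0 := by
            unfold Multigraph.valence at hv0; omega
          exact Finset.card_eq_zero.mp this
        have hB : ((univ : Finset E).filter fun e => G.snd e = v) = ∅ := by
          have : ((univ : Finset E).filter fun e => G.snd e = v).card = 0 := by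
            unfold Multigraph.valence at hv0; omega
          exact Finset.card_eq_zero.mp this
        have hnoe : ∀ e : E, G.fst e ≠ v ∧ G.snd e ≠ v := by
          intro e
          constructor
          · intro h
            have : e ∈ ((univ : Finset E).filter fun e => G.fst e = v) :=
              Finset.mem_filter.mpr ⟨Finset.mem_univ e, h⟩
            simp [hA] at this
          · intro h
            have : e ∈ ((univ : Finset E).filter fun e => G.snd e = v) :=
              Finset.mem_filter.mpr ⟨Finset.mem_univ e, h⟩
            simp [hB] at this
        by_cases hone : ∀ u : V, u = v
        · -- single vertex, no edges, genus = w v = 1 < 2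
          have hEe : (univ : Finset E) = ∅ := by
            rcases Finset.eq_empty_or_nonempty (univ : Finset E) with h | ⟨e, _⟩
            · exact h
            · exact absurd (hone (G.fst e)) (hnoe e).1
          have huniv : (univ : Finset V) = {v} := by
            ext u; simp [hone u]
          have hcardE : ((G.edgesIn (univ : Finset V)).card : ℤ) = 0 := by
            have : G.edgesIn (univ : Finset V) ⊆ (univ : Finset E) := Finset.filter_subset _ _
            rw [hEe] at this
            simp [Finset.subset_empty.mp this]
          have : G.genus w = 1 := by
            unfold Multigraph.genus Multigraph.genusOf
            rw [hcardE, huniv]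
            simp [h1]
          rw [this] at hg2; norm_num at hg2
        · push_neg at hone
          obtain ⟨u, hu⟩ := hone
          have hpath := hconn v u
          rcases Relation.ReflTransGen.cases_head hpath with heq | ⟨c, hadj, _⟩
          · exact hu heq.symm
          · obtain ⟨e, he⟩ := hadj
            rcases he with ⟨hh, _⟩ | ⟨_, hh⟩
            · exact (hnoe e).1 hh
            · exact (hnoe e).2 hh
      have h1' : (1 : ℤ) ≤ (G.valence v : ℤ) := by exact_mod_cast hval
      rw [h1]; push_cast; linarith
  · have h2 : (2 : ℤ) ≤ (w v : ℤ) := by exact_mod_cast hw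
    have h0 : (0 : ℤ) ≤ (G.valence v : ℤ) := by positivity
    linarith

private lemma cutCard_univ : G.cutCard (univ : Finset V) = 0 := by
  unfold Multigraph.cutCard
  simp [Multigraph.InCut]

private lemma Q_le (hG : G.IsStable w) (S : Finset V) :
    2 * G.genusOf w S - 2 + (G.cutCard S : ℤ) ≤ 2 * G.genus w - 2 := by
  have hu : 2 * G.genus w - 2 = ∑ v, (2 * (w v : ℤ) - 2 + (G.valence v : ℤ)) := by
    have := genus_term G w (univ : Finset V)
    rw [cutCard_univ] at this
    unfold Multigraph.genus
    push_cast at this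
    linarith
  rw [genus_term, hu]
  exact Finset.sum_le_sum_of_subset_of_nonneg (Finset.subset_univ S)
    (fun v _ _ => by linarith [term_ge_one G w hG v])

private lemma Q_ge_one (hG : G.IsStable w) {S : Finset V} (hS : S.Nonempty) :
    1 ≤ 2 * G.genusOf w S - 2 + (G.cutCard S : ℤ) := by
  rw [genus_term]
  obtain ⟨x, hx⟩ := hS
  have hnn : ∀ v ∈ S, (0:ℤ) ≤ 2 * (w v : ℤ) - 2 + (G.valence v : ℤ) :=
    fun v _ => by linarith [term_ge_one G w hG v]
  calc (1 : ℤ) ≤ 2 * (w x : ℤ) - 2 + (G.valence x : ℤ) := term_ge_one G w hG x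
  _ ≤ ∑ v ∈ S, (2 * (w v : ℤ) - 2 + (G.valence v : ℤ)) :=
      Finset.single_le_sum (f := fun v => 2 * (w v : ℤ) - 2 + (G.valence v : ℤ)) hnn hx

private lemma semistable_iff_key (hG : G.IsStable w) (d : V → ℤ)
    (hd : ∑ v, d v = G.genus w) :
    G.Semistable w d ↔ ∀ S : Finset V, S.Nonempty → G.genusOf w S ≤ ∑ v ∈ S, d v := by
  have hg2 : 2 ≤ G.genus w := hG.2.1
  constructor
  · intro hss S hS
    have h := hss S hS
    rw [hd] at h
    have hone : G.genus w - G.genus w + 1 = 1 := by ring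
    rw [hone, one_mul] at h
    have hQ1 := Q_ge_one G w hG hS
    by_contra hc
    push_neg at hc
    have hc' : ∑ v ∈ S, d v ≤ G.genusOf w S - 1 := by linarith
    have hmul := mul_le_mul_of_nonneg_left hc'
      (show (0:ℤ) ≤ 2 * G.genus w - 2 by linarith)
    nlinarith
  · intro hk S hS
    have h := hk S hS
    have hQle := Q_le G w hG S
    have hQ1 := Q_ge_one G w hG hS
    rw [hd]
    have hone : G.genus w - G.genus w + 1 = 1 := by ring
    rw [hone, one_mul]
    have hmul := mul_le_mul_of_nonneg_left h
      (show (0:ℤ) ≤ 2 * G.genus w - 2 by linarith)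
    nlinarith

private lemma hakimi :
    ∀ (n : ℕ) (F : Finset E) (m : V → ℤ), F.card = n →
    (∀ S : Finset V, ((F.filter fun e => G.fst e ∈ S ∧ G.snd e ∈ S).card : ℤ) ≤ ∑ v ∈ S, m v) →
    (∑ v, m v = (F.card : ℤ)) →
    ∃ h : E → V, (∀ e ∈ F, h e = G.fst e ∨ h e = G.snd e) ∧
      ∀ v, ((F.filter fun e => h e = v).card : ℤ) = m v := by
  intro n
  induction n with
  | zero =>
    intro F m hcard hsub hsum
    have hF : F = ∅ := Finset.card_eq_zero.mp hcard
    subst hF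
    have hnn : ∀ v ∈ (univ : Finset V), 0 ≤ m v := fun v _ => by
      have := hsub {v}; simpa using this
    have hzero : ∀ v ∈ (univ : Finset V), m v = 0 :=
      (Finset.sum_eq_zero_iff_of_nonneg hnn).mp (by simpa using hsum)
    exact ⟨fun e => G.fst e, by simp, fun v => by simp [hzero v (Finset.mem_univ v)]⟩
  | succ n ih =>
    intro F m hcard hsub hsum
    obtain ⟨e₀, he₀⟩ := Finset.card_pos.mp (by omega : 0 < F.card)
    have hgood : ∃ u, (u = G.fst e₀ ∨ u = G.snd e₀) ∧
        ∀ S : Finset V, u ∈ S → ¬(G.fst e₀ ∈ S ∧ G.snd e₀ ∈ S) →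
          ((F.filter fun e => G.fst e ∈ S ∧ G.snd e ∈ S).card : ℤ) + 1 ≤ ∑ v ∈ S, m v := by
      by_contra hno
      push_neg at hno
      obtain ⟨S, haS, heS, hStight⟩ := hno (G.fst e₀) (Or.inl rfl)
      obtain ⟨T, hbT, heT, hTtight⟩ := hno (G.snd e₀) (Or.inr rfl)
      set A := F.filter fun e => G.fst e ∈ S ∧ G.snd e ∈ S with hA
      set B := F.filter fun e => G.fst e ∈ T ∧ G.snd e ∈ T with hB
      have he₀AB : e₀ ∉ A ∪ B := by
        intro h
        rcases Finset.mem_union.mp h with h | h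
        · exact heS (Finset.mem_filter.mp h).2.1 (Finset.mem_filter.mp h).2.2
        · exact heT (Finset.mem_filter.mp h).2.1 (Finset.mem_filter.mp h).2.2
      have hsubU : insert e₀ (A ∪ B) ⊆
          F.filter fun e => G.fst e ∈ S ∪ T ∧ G.snd e ∈ S ∪ T := by
        intro e he
        rcases Finset.mem_insert.mp he with rfl | hAB
        · exact Finset.mem_filter.mpr ⟨he₀,
            Finset.mem_union_left _ haS, Finset.mem_union_right _ hbT⟩
        · rcases Finset.mem_union.mp hAB with h | h
          · have := Finset.mem_filter.mp h
            exact Finset.mem_filter.mpr ⟨this.1,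
              Finset.mem_union_left _ this.2.1, Finset.mem_union_left _ this.2.2⟩
          · have := Finset.mem_filter.mp h
            exact Finset.mem_filter.mpr ⟨this.1,
              Finset.mem_union_right _ this.2.1, Finset.mem_union_right _ this.2.2⟩
      have hsubI : A ∩ B ⊆ F.filter fun e => G.fst e ∈ S ∩ T ∧ G.snd e ∈ S ∩ T := by
        intro e he
        have h1 := Finset.mem_filter.mp (Finset.mem_inter.mp he).1
        have h2 := Finset.mem_filter.mp (Finset.mem_inter.mp he).2
        exact Finset.mem_filter.mpr ⟨h1.1,
          Finset.mem_inter.mpr ⟨h1.2.1, h2.2.1⟩, Finset.mem_inter.mpr ⟨h1.2.2, h2.2.2⟩⟩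
      have c1 : (A ∪ B).card + 1 ≤
          (F.filter fun e => G.fst e ∈ S ∪ T ∧ G.snd e ∈ S ∪ T).card := by
        rw [← Finset.card_insert_of_notMem he₀AB]
        exact Finset.card_le_card hsubU
      have c2 : (A ∩ B).card ≤
          (F.filter fun e => G.fst e ∈ S ∩ T ∧ G.snd e ∈ S ∩ T).card :=
        Finset.card_le_card hsubI
      have h1 := hsub (S ∪ T)
      have h2 := hsub (S ∩ T)
      have hmod : ∑ v ∈ S ∪ T, m v + ∑ v ∈ S ∩ T, m v = ∑ v ∈ S, m v + ∑ v ∈ T, m v :=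
        Finset.sum_union_inter
      have hcardUI : (A ∪ B).card + (A ∩ B).card = A.card + B.card :=
        Finset.card_union_add_card_inter A B
      have c1' : ((A ∪ B).card : ℤ) + 1 ≤
          ((F.filter fun e => G.fst e ∈ S ∪ T ∧ G.snd e ∈ S ∪ T).card : ℤ) := by
        exact_mod_cast c1
      have c2' : ((A ∩ B).card : ℤ) ≤
          ((F.filter fun e => G.fst e ∈ S ∩ T ∧ G.snd e ∈ S ∩ T).card : ℤ) := by
        exact_mod_cast c2
      have hcardUI' : ((A ∪ B).card : ℤ) + ((A ∩ B).card : ℤ) = (A.card : ℤ) + (B.card : ℤ) := by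
        exact_mod_cast hcardUI
      linarith
    obtain ⟨u, hu, hgood⟩ := hgood
    set F' := F.erase e₀ with hF'
    set m' := fun x => m x - if x = u then (1:ℤ) else 0 with hm'
    have hF'card : F'.card = n := by
      rw [hF', Finset.card_erase_of_mem he₀]; omega
    have hsplitS : ∀ S : Finset V,
        ∑ v ∈ S, m' v = ∑ v ∈ S, m v - (if u ∈ S then (1:ℤ) else 0) := by
      intro S
      rw [hm']
      rw [Finset.sum_sub_distrib]
      congr 1
      exact Finset.sum_ite_eq' S u fun _ => (1:ℤ)
    have hsub' : ∀ S : Finset V,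
        ((F'.filter fun e => G.fst e ∈ S ∧ G.snd e ∈ S).card : ℤ) ≤ ∑ v ∈ S, m' v := by
      intro S
      have hle : (F'.filter fun e => G.fst e ∈ S ∧ G.snd e ∈ S).card ≤
          (F.filter fun e => G.fst e ∈ S ∧ G.snd e ∈ S).card :=
        Finset.card_le_card (Finset.filter_subset_filter _ (Finset.erase_subset _ _))
      rw [hsplitS S]
      by_cases huS : u ∈ S
      · rw [if_pos huS]
        by_cases hP : G.fst e₀ ∈ S ∧ G.snd e₀ ∈ S
        · have hmem : e₀ ∈ F.filter fun e => G.fst e ∈ S ∧ G.snd e ∈ S :=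
            Finset.mem_filter.mpr ⟨he₀, hP⟩
          have heq : F'.filter (fun e => G.fst e ∈ S ∧ G.snd e ∈ S)
              = (F.filter fun e => G.fst e ∈ S ∧ G.snd e ∈ S).erase e₀ := by
            rw [hF', Finset.filter_erase]
          rw [heq, Finset.card_erase_of_mem hmem]
          have hpos : 1 ≤ (F.filter fun e => G.fst e ∈ S ∧ G.snd e ∈ S).card :=
            Finset.card_pos.mpr ⟨e₀, hmem⟩
          have h := hsub S
          have : (((F.filter fun e => G.fst e ∈ S ∧ G.snd e ∈ S).card - 1 : ℕ) : ℤ)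
              = ((F.filter fun e => G.fst e ∈ S ∧ G.snd e ∈ S).card : ℤ) - 1 := by
            push_cast [hpos]; ring
          rw [this]
          linarith
        · have h := hgood S huS hP
          have hle' : ((F'.filter fun e => G.fst e ∈ S ∧ G.snd e ∈ S).card : ℤ) ≤
              ((F.filter fun e => G.fst e ∈ S ∧ G.snd e ∈ S).card : ℤ) := by exact_mod_cast hle
          linarith
      · rw [if_neg huS]
        have h := hsub S
        have hle' : ((F'.filter fun e => G.fst e ∈ S ∧ G.snd e ∈ S).card : ℤ) ≤
            ((F.filter fun e => G.fst e ∈ S ∧ G.snd e ∈ S).card : ℤ) := by exact_mod_cast hle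
        linarith
    have hsum' : ∑ v, m' v = (F'.card : ℤ) := by
      rw [hsplitS univ, if_pos (Finset.mem_univ u), hsum, hcard, hF'card]
      push_cast; ring
    obtain ⟨h', hh'1, hh'2⟩ := ih F' m' hF'card hsub' hsum'
    refine ⟨Function.update h' e₀ u, ?_, ?_⟩
    · intro e he
      by_cases heq : e = e₀
      · subst heq; rw [Function.update_self]; exact hu
      · rw [Function.update_of_ne heq]
        exact hh'1 e (Finset.mem_erase.mpr ⟨heq, he⟩)
    · intro v
      have hFins : F = insert e₀ F' := (Finset.insert_erase he₀).symm
      have he₀F' : e₀ ∉ F' := Finset.notMem_erase _ _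
      have hfilter' : F'.filter (fun e => Function.update h' e₀ u e = v)
          = F'.filter (fun e => h' e = v) := by
        apply Finset.filter_congr
        intro e he
        rw [Function.update_of_ne (Finset.mem_erase.mp he).1]
      rw [hFins, Finset.filter_insert]
      by_cases hv : u = v
      · rw [if_pos (by rw [Function.update_self]; exact hv)]
        rw [Finset.card_insert_of_notMem
          (fun hmem => he₀F' (Finset.filter_subset _ _ hmem))]
        rw [hfilter']
        push_cast
        rw [hh'2 v]
        rw [hm']
        simp [← hv]
      · rw [if_neg (by rw [Function.update_self]; exact hv)]
        rw [hfilter', hh'2 v, hm']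
        simp [Ne.symm hv]

end AuxProof

/-- A multidegree of total degree `g` on a stable weighted multigraph is
semistable iff there exist a vertex `v` and an orientation `O` with `d = d_O + v` and
no nonempty proper subset `S ⊊ V` with `v ∈ S` whose cut is directed towards `S`. -/
theorem semistable_degree_g_iff_exists_orientation
    (G : Multigraph V E) (w : V → ℕ) (hG : G.IsStable w) (d : V → ℤ)
    (hd : ∑ v, d v = G.genus w) :
    G.Semistable w d ↔
      ∃ (v : V) (O : GraphOrientation G),
        d = (fun u => O.multidegree w u + if u = v then 1 else 0) ∧
        ¬ ∃ S : Finset V, S.Nonempty ∧ S ≠ univ ∧ v ∈ S ∧ O.CutTowards S := by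
  classical
  have hkey := semistable_iff_key G w hG d hd
  constructor
  · intro hss
    have key : ∀ S : Finset V, S.Nonempty → G.genusOf w S ≤ ∑ u ∈ S, d u := hkey.mp hss
    obtain ⟨v⟩ := hG.1.1
    set m : V → ℤ := fun u => d u - (w u : ℤ) + 1 - if u = v then 1 else 0 with hm
    have hsplitS : ∀ S : Finset V, ∑ u ∈ S, m u
        = ∑ u ∈ S, (d u - (w u:ℤ) + 1) - (if v ∈ S then (1:ℤ) else 0) := by
      intro S
      rw [hm, Finset.sum_sub_distrib]
      congr 1
      exact Finset.sum_ite_eq' S v fun _ => (1:ℤ)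
    have hsplit2 : ∀ S : Finset V, ∑ u ∈ S, (d u - (w u:ℤ) + 1)
        = ∑ u ∈ S, d u - ∑ u ∈ S, (w u:ℤ) + S.card := by
      intro S
      rw [Finset.sum_add_distrib, Finset.sum_sub_distrib]
      simp
    have key' : ∀ S : Finset V, S.Nonempty →
        ((G.edgesIn S).card : ℤ) + 1 ≤ ∑ u ∈ S, (d u - (w u:ℤ) + 1) := by
      intro S hS
      have h := key S hS
      unfold Multigraph.genusOf at h
      rw [hsplit2 S]
      linarith
    have hsub : ∀ S : Finset V,
        (((univ : Finset E).filter fun e => G.fst e ∈ S ∧ G.snd e ∈ S).card : ℤ)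
          ≤ ∑ u ∈ S, m u := by
      intro S
      rcases S.eq_empty_or_nonempty with rfl | hS
      · simp
      · have h := key' S hS
        have hE : ((univ : Finset E).filter fun e => G.fst e ∈ S ∧ G.snd e ∈ S)
            = G.edgesIn S := rfl
        rw [hE, hsplitS S]
        by_cases hv : v ∈ S
        · rw [if_pos hv]; linarith
        · rw [if_neg hv]; linarith
    have hsum : ∑ u, m u = (((univ : Finset E)).card : ℤ) := by
      have hE : G.edgesIn (univ : Finset V) = (univ : Finset E) := by
        unfold Multigraph.edgesIn
        exact Finset.filter_true_of_mem fun e _ => ⟨Finset.mem_univ _, Finset.mem_univ _⟩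
      have hgen : G.genus w = ((univ : Finset E).card : ℤ) - ((univ : Finset V).card : ℤ)
          + 1 + ∑ u, (w u : ℤ) := by
        unfold Multigraph.genus Multigraph.genusOf
        rw [hE]
      rw [hsplitS univ, hsplit2 univ, if_pos (Finset.mem_univ v), hd, hgen]
      ring
    obtain ⟨h, hh1, hh2⟩ := hakimi G ((univ : Finset E).card) univ m rfl hsub hsum
    refine ⟨v, ⟨fun e => if h e = G.fst e then G.snd e else G.fst e, h, fun e => ?_⟩, ?_, ?_⟩
    · by_cases heq : h e = G.fst e
      · exact Or.inr ⟨if_pos heq, heq⟩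
      · rcases hh1 e (Finset.mem_univ e) with h1 | h2
        · exact absurd h1 heq
        · exact Or.inl ⟨if_neg heq, h2⟩
    · funext u
      simp only [GraphOrientation.multidegree, GraphOrientation.indeg]
      rw [hh2 u, hm]
      by_cases hv : u = v <;> simp [hv] <;> try ring
    · rintro ⟨S, hSne, hSuniv, hvS, hcut⟩
      set T := univ \ S with hT
      have hTne : T.Nonempty := by
        obtain ⟨x, hx⟩ : ∃ x, x ∉ S := by
          by_contra hall
          push_neg at hall
          exact hSuniv (Finset.eq_univ_iff_forall.mpr hall)
        exact ⟨x, Finset.mem_sdiff.mpr ⟨Finset.mem_univ x, hx⟩⟩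
      have hvT : v ∉ T := fun hmem => (Finset.mem_sdiff.mp hmem).2 hvS
      have h1 : ((G.edgesIn T).card : ℤ) + 1 ≤ ∑ u ∈ T, m u := by
        have h := key' T hTne
        rw [hsplitS T, if_neg hvT]
        linarith
      have hsum2 : ∑ u ∈ T, m u
          = (((univ : Finset E).filter fun e => h e ∈ T).card : ℤ) := by
        have hcg : ∀ u ∈ T, m u = (((univ : Finset E).filter fun e => h e = u).card : ℤ) :=
          fun u _ => (hh2 u).symm
        rw [Finset.sum_congr rfl hcg]
        exact_mod_cast congrArg (Nat.cast : ℕ → ℤ) (sum_fiber_card h T)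
      have hsub2 : ((univ : Finset E).filter fun e => h e ∈ T) ⊆ G.edgesIn T := by
        intro e he
        have hhe : h e ∈ T := (Finset.mem_filter.mp he).2
        have hnotS : h e ∉ S := (Finset.mem_sdiff.mp hhe).2
        have hnic : ¬ G.InCut S e := fun hic => hnotS (hcut e hic)
        have hfs : G.fst e ∉ S ∧ G.snd e ∉ S := by
          by_cases hf : G.fst e ∈ S <;> by_cases hs : G.snd e ∈ S
          · rcases hh1 e (Finset.mem_univ e) with h1' | h1'
            · exact absurd (h1' ▸ hf) hnotS
            · exact absurd (h1' ▸ hs) hnotS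
          · exact absurd (Or.inl ⟨hf, hs⟩) hnic
          · exact absurd (Or.inr ⟨hf, hs⟩) hnic
          · exact ⟨hf, hs⟩
        have : G.fst e ∈ T ∧ G.snd e ∈ T :=
          ⟨Finset.mem_sdiff.mpr ⟨Finset.mem_univ _, hfs.1⟩,
           Finset.mem_sdiff.mpr ⟨Finset.mem_univ _, hfs.2⟩⟩
        exact Finset.mem_filter.mpr ⟨Finset.mem_univ e, this⟩
      have h2 : (((univ : Finset E).filter fun e => h e ∈ T).card : ℤ)
          ≤ ((G.edgesIn T).card : ℤ) := by
        exact_mod_cast Finset.card_le_card hsub2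
      linarith
  · rintro ⟨v, O, hdeq, hno⟩
    refine hkey.mpr ?_
    intro S hS
    have hdu : ∀ u, d u = (w u : ℤ) - 1 + (O.indeg u : ℤ) + (if u = v then 1 else 0) := by
      intro u
      rw [hdeq]
      simp [GraphOrientation.multidegree]
      try ring
    have hsplit : ∑ u ∈ S, d u = (∑ u ∈ S, (w u:ℤ)) - S.card
        + (∑ u ∈ S, (O.indeg u : ℤ)) + (if v ∈ S then (1:ℤ) else 0) := by
      rw [Finset.sum_congr rfl fun u _ => hdu u]
      rw [Finset.sum_add_distrib, Finset.sum_add_distrib, Finset.sum_sub_distrib]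
      rw [Finset.sum_ite_eq' S v fun _ => (1:ℤ)]
      simp
    have hindeg : ∑ u ∈ S, (O.indeg u : ℤ)
        = (((univ : Finset E).filter fun e => O.head e ∈ S).card : ℤ) := by
      simp only [GraphOrientation.indeg]
      exact_mod_cast congrArg (Nat.cast : ℕ → ℤ) (sum_fiber_card O.head S)
    have hEsub : G.edgesIn S ⊆ (univ : Finset E).filter fun e => O.head e ∈ S := by
      intro e he
      have hm := (Finset.mem_filter.mp he).2
      rcases O.compat e with ⟨_, hh⟩ | ⟨_, hh⟩
      · exact Finset.mem_filter.mpr ⟨Finset.mem_univ e, hh ▸ hm.2⟩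
      · exact Finset.mem_filter.mpr ⟨Finset.mem_univ e, hh ▸ hm.1⟩
    unfold Multigraph.genusOf
    by_cases hv : v ∈ S
    · have hc : ((G.edgesIn S).card : ℤ)
          ≤ (((univ : Finset E).filter fun e => O.head e ∈ S).card : ℤ) := by
        exact_mod_cast Finset.card_le_card hEsub
      rw [hsplit, if_pos hv, hindeg]
      linarith
    · set T := univ \ S with hT
      have hvT : v ∈ T := Finset.mem_sdiff.mpr ⟨Finset.mem_univ v, hv⟩
      have hTuniv : T ≠ univ := by
        obtain ⟨x, hx⟩ := hS
        intro heq
        have : x ∈ T := heq ▸ Finset.mem_univ x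
        exact (Finset.mem_sdiff.mp this).2 hx
      have hnc : ¬ O.CutTowards T := fun hc => hno ⟨T, ⟨v, hvT⟩, hTuniv, hvT, hc⟩
      unfold GraphOrientation.CutTowards at hnc
      push_neg at hnc
      obtain ⟨e, hecut, hehead⟩ := hnc
      have hheadS : O.head e ∈ S := by
        by_contra hh
        exact hehead (Finset.mem_sdiff.mpr ⟨Finset.mem_univ _, hh⟩)
      have heE : e ∉ G.edgesIn S := by
        intro hmem
        have hb := (Finset.mem_filter.mp hmem).2
        rcases hecut with ⟨h1', _⟩ | ⟨_, h2'⟩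
        · exact (Finset.mem_sdiff.mp h1').2 hb.1
        · exact (Finset.mem_sdiff.mp h2').2 hb.2
      have hins : insert e (G.edgesIn S) ⊆ (univ : Finset E).filter fun e => O.head e ∈ S := by
        intro x hx
        rcases Finset.mem_insert.mp hx with rfl | hx'
        · exact Finset.mem_filter.mpr ⟨Finset.mem_univ _, hheadS⟩
        · exact hEsub hx'
      have hc : ((G.edgesIn S).card : ℤ) + 1
          ≤ (((univ : Finset E).filter fun e => O.head e ∈ S).card : ℤ) := by
        have : (insert e (G.edgesIn S)).card
            ≤ ((univ : Finset E).filter fun e => O.head e ∈ S).card :=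
          Finset.card_le_card hins
        rw [Finset.card_insert_of_notMem heE] at this
        exact_mod_cast this
      rw [hsplit, if_neg hv, hindeg]
      linarith
end
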